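/- Let U be a unitary operator on a Hilbert space H whose eigenvectors span a dense subspace of H (U is discrete). Then U* lies in the weak operator topology closure of the algebra generated by U. -/

import Mathlib

open Filter Topology

private lemma powers_near_one (s : Finset ℂ) (hs : ∀ μ ∈ s, ‖μ‖ = 1) {δ : ℝ} (hδ : 0 < δ) :
    ∃ m : ℕ, 1 ≤ m ∧ ∀ μ ∈ s, ‖μ ^ m - 1‖ < δ := by
  classical
  set f : ℕ → (s → ℂ) := fun n μ => (μ : ℂ) ^ n with hf
  have hmem : ∀ n, f n ∈ Metric.closedBall (0 : s → ℂ) 1 := by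
    intro n
    rw [Metric.mem_closedBall, dist_zero_right]
    refine (pi_norm_le_iff_of_nonneg zero_le_one).mpr fun μ => ?_
    simp only [hf]
    rw [norm_pow, hs μ μ.2, one_pow]
  obtain ⟨a, -, φ, hφ, ha⟩ := tendsto_subseq_of_bounded Metric.isBounded_closedBall hmem
  obtain ⟨N, hN⟩ := (Metric.tendsto_atTop.mp ha) (δ / 2) (half_pos hδ)
  refine ⟨φ (N + 1) - φ N, ?_, ?_⟩
  · have := hφ (show N < N + 1 by omega); omega
  · intro μ hμ
    have h1 : dist ((f ∘ φ) (N + 1)) a < δ / 2 := hN (N + 1) (by omega)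
    have h2 : dist ((f ∘ φ) N) a < δ / 2 := hN N le_rfl
    have h3 : dist ((f (φ (N + 1))) ⟨μ, hμ⟩) ((f (φ N)) ⟨μ, hμ⟩) < δ := by
      calc dist ((f (φ (N + 1))) ⟨μ, hμ⟩) ((f (φ N)) ⟨μ, hμ⟩)
          ≤ dist (f (φ (N + 1))) (f (φ N)) := dist_le_pi_dist _ _ _
        _ ≤ dist ((f ∘ φ) (N + 1)) a + dist ((f ∘ φ) N) a := dist_triangle_right _ _ _
        _ < δ / 2 + δ / 2 := add_lt_add h1 h2
        _ = δ := add_halves δ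
    have hμ1 : ‖μ‖ = 1 := hs μ hμ
    have key : μ ^ (φ N) * (μ ^ (φ (N + 1) - φ N) - 1) = μ ^ (φ (N + 1)) - μ ^ (φ N) := by
      rw [mul_sub, mul_one, ← pow_add]
      congr 2
      have := hφ (show N < N + 1 by omega)
      omega
    have hnorm : ‖μ ^ (φ (N + 1) - φ N) - 1‖ = ‖μ ^ (φ (N + 1)) - μ ^ (φ N)‖ := by
      rw [← key, norm_mul, norm_pow, hμ1, one_pow, one_mul]
    rw [hnorm]
    simpa [hf, dist_eq_norm] using h3

private lemma pow_apply_eigen {H : Type*} [NormedAddCommGroup H] [InnerProductSpace ℂ H]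
    {U : H →L[ℂ] H} {μ : ℂ} {w : H}
    (hw : w ∈ Module.End.eigenspace (U : H →ₗ[ℂ] H) μ) (m : ℕ) :
    (U ^ m) w = μ ^ m • w := by
  have hw' : U w = μ • w := Module.End.mem_eigenspace_iff.mp hw
  induction m with
  | zero => simp
  | succ k ih =>
      rw [pow_succ, ContinuousLinearMap.mul_apply, hw', map_smul, ih, pow_succ, smul_smul,
        mul_comm]

private lemma pow_isometry {H : Type*} [NormedAddCommGroup H] [InnerProductSpace ℂ H]
    [CompleteSpace H] {U : H →L[ℂ] H} (hU : U ∈ unitary (H →L[ℂ] H)) (m : ℕ) (x : H) :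
    ‖(U ^ m) x‖ = ‖x‖ := by
  induction m generalizing x with
  | zero => simp
  | succ k ih =>
      rw [pow_succ, ContinuousLinearMap.mul_apply, ih, ContinuousLinearMap.norm_map_of_mem_unitary hU]

private lemma exists_pow_close {H : Type*} [NormedAddCommGroup H] [InnerProductSpace ℂ H]
    [CompleteSpace H]
    (U : H →L[ℂ] H) (hU : U ∈ unitary (H →L[ℂ] H))
    (hdiscrete : (⨆ μ : ℂ, Module.End.eigenspace (U : H →ₗ[ℂ] H) μ).topologicalClosure = ⊤)
    {ε : ℝ} (hε : 0 < ε) (t : Finset H) :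
    ∃ m : ℕ, 1 ≤ m ∧ ∀ v ∈ t, ‖(U ^ m) v - v‖ < ε := by
  classical
  have hiso : ∀ x : H, ‖U x‖ = ‖x‖ := fun x => ContinuousLinearMap.norm_map_of_mem_unitary hU x
  have hdense : Dense ((⨆ μ : ℂ, Module.End.eigenspace (U : H →ₗ[ℂ] H) μ : Submodule ℂ H) : Set H) :=
    Submodule.dense_iff_topologicalClosure_eq_top.mpr hdiscrete
  have hz : ∀ v : H, ∃ z ∈ ((⨆ μ : ℂ, Module.End.eigenspace (U : H →ₗ[ℂ] H) μ :
      Submodule ℂ H) : Set H), dist v z < ε / 3 :=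
    fun v => hdense.exists_dist_lt v (by positivity)
  choose z hzmem hzdist using hz
  have hc : ∀ v : H, ∃ c : ℂ →₀ H,
      (∀ μ, c μ ∈ Module.End.eigenspace (U : H →ₗ[ℂ] H) μ) ∧ (c.sum fun _ w => w) = z v :=
    fun v => (Submodule.mem_iSup_iff_exists_finsupp _ _).mp (hzmem v)
  choose c hcmem hcsum using hc
  set Λ : Finset ℂ := t.biUnion fun v => (c v).support with hΛdef
  have hΛ : ∀ μ ∈ Λ, ‖μ‖ = 1 := by
    intro μ hμ
    obtain ⟨v, -, hμv⟩ := Finset.mem_biUnion.mp hμ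
    have hne : c v μ ≠ 0 := Finsupp.mem_support_iff.mp hμv
    have hUv : U (c v μ) = μ • c v μ := Module.End.mem_eigenspace_iff.mp (hcmem v μ)
    have h1 : ‖μ‖ * ‖c v μ‖ = ‖c v μ‖ := by rw [← norm_smul, ← hUv, hiso]
    exact mul_right_cancel₀ (norm_ne_zero_iff.mpr hne) (h1.trans (one_mul _).symm)
  set B : ℝ := ∑ v ∈ t, ∑ μ ∈ (c v).support, ‖c v μ‖ with hBdef
  have hBnn : 0 ≤ B :=
    Finset.sum_nonneg fun v _ => Finset.sum_nonneg fun μ _ => norm_nonneg _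
  have hδ : 0 < ε / 3 / (B + 1) := by positivity
  obtain ⟨m, hm1, hm2⟩ := powers_near_one Λ hΛ hδ
  refine ⟨m, hm1, fun v hv => ?_⟩
  have hmid : ‖(U ^ m) (z v) - z v‖ ≤ ε / 3 := by
    have hzv : (∑ μ ∈ (c v).support, c v μ) = z v := hcsum v
    have h1 : (U ^ m) (z v) - z v = ∑ μ ∈ (c v).support, (μ ^ m - 1) • c v μ := by
      rw [← hzv, map_sum, ← Finset.sum_sub_distrib]
      refine Finset.sum_congr rfl fun μ _ => ?_
      rw [pow_apply_eigen (hcmem v μ) m, sub_smul, one_smul]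
    rw [h1]
    calc ‖∑ μ ∈ (c v).support, (μ ^ m - 1) • c v μ‖
        ≤ ∑ μ ∈ (c v).support, ‖(μ ^ m - 1) • c v μ‖ := norm_sum_le _ _
      _ ≤ ∑ μ ∈ (c v).support, ε / 3 / (B + 1) * ‖c v μ‖ := by
          refine Finset.sum_le_sum fun μ hμ => ?_
          rw [norm_smul]
          exact mul_le_mul_of_nonneg_right
            (le_of_lt (hm2 μ (Finset.mem_biUnion.mpr ⟨v, hv, hμ⟩))) (norm_nonneg _)
      _ = ε / 3 / (B + 1) * ∑ μ ∈ (c v).support, ‖c v μ‖ := by rw [Finset.mul_sum]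
      _ ≤ ε / 3 / (B + 1) * (B + 1) := by
          refine mul_le_mul_of_nonneg_left ?_ (le_of_lt hδ)
          have hle : ∑ μ ∈ (c v).support, ‖c v μ‖ ≤ B :=
            Finset.single_le_sum (f := fun v => ∑ μ ∈ (c v).support, ‖c v μ‖)
              (fun v _ => Finset.sum_nonneg fun _ _ => norm_nonneg _) hv
          linarith
      _ = ε / 3 := div_mul_cancel₀ _ (by positivity)
  have hdecomp : (U ^ m) v - v = (U ^ m) (v - z v) + ((U ^ m) (z v) - z v) + (z v - v) := by
    rw [map_sub]; abel
  have e1 : ‖(U ^ m) (v - z v)‖ = ‖v - z v‖ := pow_isometry hU m _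
  have e2 : ‖z v - v‖ = ‖v - z v‖ := norm_sub_rev _ _
  have t1 : ‖(U ^ m) v - v‖ ≤ ‖(U ^ m) (v - z v)‖ + ‖(U ^ m) (z v) - z v‖ + ‖z v - v‖ := by
    rw [hdecomp]; exact norm_add₃_le
  have h4 : ‖v - z v‖ < ε / 3 := by
    have := hzdist v; rwa [dist_eq_norm] at this
  linarith

/-- If `U` is a unitary on a separable Hilbert space whose eigenvectors
span a dense subspace (`U` is discrete), then `U*` lies in the WOT-closure of the algebra
of polynomials in `U`. -/
theorem stmt2 {H : Type*} [NormedAddCommGroup H] [InnerProductSpace ℂ H] [CompleteSpace H]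
    [SecondCountableTopology H]
    (U : H →L[ℂ] H) (hU : U ∈ unitary (H →L[ℂ] H))
    (hdiscrete : (⨆ μ : ℂ, Module.End.eigenspace (U : H →ₗ[ℂ] H) μ).topologicalClosure = ⊤) :
    (ContinuousLinearMapWOT.ofCLM (star U) : ContinuousLinearMapWOT (RingHom.id ℂ) H H) ∈
      closure ((ContinuousLinearMapWOT.ofCLM : (H →L[ℂ] H) → ContinuousLinearMapWOT (RingHom.id ℂ) H H) ''
        ((Algebra.adjoin ℂ {U} : Subalgebra ℂ (H →L[ℂ] H)) : Set (H →L[ℂ] H))) := by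
  classical
  have he : DenseRange (TopologicalSpace.denseSeq H) := TopologicalSpace.denseRange_denseSeq H
  set e : ℕ → H := TopologicalSpace.denseSeq H with hedef
  have key : ∀ n : ℕ, ∃ m : ℕ, 1 ≤ m ∧
      ∀ v ∈ (Finset.range (n + 1)).image e, ‖(U ^ m) v - v‖ < 1 / (n + 1) :=
    fun n => exists_pow_close U hU hdiscrete (by positivity) _
  choose m hm1 hm2 using key
  have hstrong : ∀ x : H, Tendsto (fun n => (U ^ m n) x) atTop (𝓝 x) := by
    intro x
    rw [Metric.tendsto_atTop]
    intro ε hε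
    obtain ⟨i, hi⟩ := he.exists_dist_lt x (by positivity : (0 : ℝ) < ε / 3)
    obtain ⟨N, hN⟩ := exists_nat_gt (3 / ε)
    refine ⟨max i N, fun n hn => ?_⟩
    have hni : i ≤ n := le_trans (le_max_left _ _) hn
    have hnN : N ≤ n := le_trans (le_max_right _ _) hn
    have h2 : ‖(U ^ m n) (e i) - e i‖ < 1 / (n + 1) :=
      hm2 n (e i) (Finset.mem_image.mpr ⟨i, Finset.mem_range.mpr (by omega), rfl⟩)
    have h3 : (1 : ℝ) / (n + 1) < ε / 3 := by
      have hN' : (3 : ℝ) < ε * N := by rwa [div_lt_iff₀ hε, mul_comm] at hN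
      rw [div_lt_div_iff₀ (by positivity) (by norm_num)]
      have hcast : (N : ℝ) ≤ n := Nat.cast_le.mpr hnN
      nlinarith [hε.le]
    have hdecomp : (U ^ m n) x - x =
        (U ^ m n) (x - e i) + ((U ^ m n) (e i) - e i) + (e i - x) := by
      rw [map_sub]; abel
    have t1 : ‖(U ^ m n) x - x‖ ≤
        ‖(U ^ m n) (x - e i)‖ + ‖(U ^ m n) (e i) - e i‖ + ‖e i - x‖ := by
      rw [hdecomp]; exact norm_add₃_le
    have e1 : ‖(U ^ m n) (x - e i)‖ = ‖x - e i‖ := pow_isometry hU _ _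
    have e2 : ‖e i - x‖ = ‖x - e i‖ := norm_sub_rev _ _
    have h5 : ‖x - e i‖ < ε / 3 := by rwa [dist_eq_norm] at hi
    rw [dist_eq_norm]
    linarith
  have hkey2 : ∀ x : H, Tendsto (fun n => (U ^ (m n - 1)) x) atTop (𝓝 ((star U) x)) := by
    intro x
    have hcomp : ∀ n, (U ^ (m n - 1)) x = (star U) ((U ^ m n) x) := by
      intro n
      obtain ⟨k, hk⟩ : ∃ k, m n = k + 1 := ⟨m n - 1, (Nat.succ_pred_eq_of_pos (hm1 n)).symm⟩
      have hstar : star U * U = 1 := (Unitary.mem_iff.mp hU).1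
      calc (U ^ (m n - 1)) x = ((star U * U) * U ^ (m n - 1)) x := by rw [hstar, one_mul]
        _ = (star U * U ^ m n) x := by
            rw [hk, Nat.add_sub_cancel, mul_assoc, ← pow_succ']
        _ = (star U) ((U ^ m n) x) := rfl
    simp only [hcomp]
    exact ((star U).continuous.tendsto x).comp (hstrong x)
  refine mem_closure_of_tendsto (b := (atTop : Filter ℕ))
    (f := fun n => (ContinuousLinearMapWOT.ofCLM (U ^ (m n - 1)) : ContinuousLinearMapWOT (RingHom.id ℂ) H H)) ?_ ?_
  · rw [ContinuousLinearMapWOT.tendsto_iff_forall_dual_apply_tendsto]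
    intro x y
    have h := (y.continuous.tendsto _).comp (hkey2 x)
    exact h
  · refine Filter.Eventually.of_forall fun n => ?_
    exact ⟨U ^ (m n - 1), pow_mem (Algebra.subset_adjoin (Set.mem_singleton U)) _, rfl⟩
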